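/- Fix m ≥ 3 and let μ be a Borel probability measure on ℝ² absolutely continuous with respect to Lebesgue measure. Let u ∈ Δ^m satisfy u_z > 0 for all z and max_z u_z < 1 − δ(μ). Then there exist real angles η_1 < η_2 < ⋯ < η_m < η_{m+1} = η_1 + 2π with η_{z+1} − η_z < π for every z ∈ {1,…,m}, such that for each z ∈ {1,…,m}, μ({p ∈ ℝ² : p = (r cos a, r sin a) for some r > 0 and some a with η_z ≤ a < η_{z+1}}) = u_z. -/

import Mathlib

set_option linter.unusedSectionVars false
set_option maxHeartbeats 1000000

open Finset MeasureTheory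
open scoped RealInnerProductSpace

/-- The probability simplex Δ^m. -/
def simplex (m : ℕ) : Set (Fin m → ℝ) :=
  {u | (∀ z, 0 ≤ u z) ∧ ∑ z, u z = 1}

/-- Halfspace depth of the origin: δ(μ) = inf over v ≠ 0 of μ({θ : ⟨θ,v⟩ ≥ 0}). -/
noncomputable def depth (μ : Measure (EuclideanSpace ℝ (Fin 2))) : ℝ :=
  sInf {r | ∃ v : EuclideanSpace ℝ (Fin 2), v ≠ 0 ∧
    r = (μ {θ | 0 ≤ ⟪θ, v⟫}).toReal}

/-- The angular sector {(r cos a, r sin a) : r > 0, lo ≤ a < hi} in ℝ². -/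
def sector (lo hi : ℝ) : Set (EuclideanSpace ℝ (Fin 2)) :=
  {p | ∃ r : ℝ, 0 < r ∧ ∃ a : ℝ, lo ≤ a ∧ a < hi ∧
    p 0 = r * Real.cos a ∧ p 1 = r * Real.sin a}

section Aux
open Real Set

namespace PF
variable (G : ℝ → ℝ)

noncomputable def LL (x : ℝ) : ℝ := sInf {t | x ≤ G t}
noncomputable def RR (x : ℝ) : ℝ := sSup {t | G t ≤ x}

variable {G}
variable (hc : Continuous G) (hm : Monotone G) (hp : ∀ t, G (t + 2*π) = G t + 1)

section basics
include hp hm in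
lemma per_int : ∀ (k : ℤ) (t : ℝ), G (t + k * (2*π)) = G t + k := by
  have h1 : ∀ t : ℝ, G (t - 2*π) = G t - 1 := by
    intro t; have := hp (t - 2*π); simp at this; linarith
  intro k
  induction k using Int.induction_on with
  | zero => simp
  | succ n ih => intro t; have := hp (t + n*(2*π)); push_cast;
                 have h2 := ih t; push_cast at h2; rw [show t + (n+1)*(2*π) = t + n*(2*π) + 2*π by ring, this, h2]; ring
  | pred n ih => intro t; have h2 := ih t; push_cast at h2 ⊢
                 have := h1 (t + (-n)*(2*π))
                 rw [show t + (-n - 1)*(2*π) = t + (-n)*(2*π) - 2*π by ring, this, h2]; ring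

include hp hm hc in
lemma surj : ∀ x : ℝ, ∃ t, G t = x := by
  intro x
  obtain ⟨n, hn⟩ := exists_nat_ge (|x| + |G 0| + 1)
  have e1 : G ((-n : ℤ) * (2*π)) = G 0 + (-n : ℤ) := by simpa using per_int hm hp (-n) 0
  have e2 : G ((n : ℤ) * (2*π)) = G 0 + (n : ℤ) := by simpa using per_int hm hp n 0
  have hab : ((-n:ℤ) * (2*π) : ℝ) ≤ ((n:ℤ) * (2*π) : ℝ) := by
    have := Real.two_pi_pos; push_cast; nlinarith [n.cast_nonneg (α := ℝ)]
  have hx : x ∈ Icc (G ((-n : ℤ) * (2*π))) (G ((n:ℤ) * (2*π))) := by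
    rw [e1, e2]; push_cast
    constructor
    · cases abs_cases x with
      | inl h => cases abs_cases (G 0) with
        | inl h2 => nlinarith
        | inr h2 => nlinarith
      | inr h => cases abs_cases (G 0) with
        | inl h2 => nlinarith
        | inr h2 => nlinarith
    · cases abs_cases x with
      | inl h => cases abs_cases (G 0) with
        | inl h2 => nlinarith
        | inr h2 => nlinarith
      | inr h => cases abs_cases (G 0) with
        | inl h2 => nlinarith
        | inr h2 => nlinarith
  obtain ⟨t, _, ht⟩ := intermediate_value_Icc hab hc.continuousOn hx
  exact ⟨t, ht⟩

include hp hm hc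

lemma LL_ne (x : ℝ) : {t | x ≤ G t}.Nonempty := by
  obtain ⟨t, ht⟩ := surj hc hm hp x; exact ⟨t, ht.ge⟩

lemma RR_ne (x : ℝ) : {t | G t ≤ x}.Nonempty := by
  obtain ⟨t, ht⟩ := surj hc hm hp x; exact ⟨t, ht.le⟩


lemma LL_bdd (x : ℝ) : BddBelow {t | x ≤ G t} := by
  obtain ⟨n, hn⟩ := exists_nat_ge (G 0 - x + 1)
  refine ⟨(-n : ℤ) * (2*π), fun t ht => ?_⟩
  by_contra hlt
  push_neg at hlt
  have h1 : G t ≤ G ((-n : ℤ) * (2*π)) := hm hlt.le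
  have h2 : G ((-n : ℤ) * (2*π)) = G 0 + (-n : ℤ) := by simpa using per_int hm hp (-n) 0
  have : x ≤ G t := ht
  push_cast at h2 h1
  linarith

lemma RR_bdd (x : ℝ) : BddAbove {t | G t ≤ x} := by
  obtain ⟨n, hn⟩ := exists_nat_ge (x - G 0 + 1)
  refine ⟨(n : ℤ) * (2*π), fun t ht => ?_⟩
  by_contra hlt
  push_neg at hlt
  have h1 : G ((n : ℤ) * (2*π)) ≤ G t := hm hlt.le
  have h2 : G ((n : ℤ) * (2*π)) = G 0 + (n : ℤ) := by simpa using per_int hm hp n 0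
  have : G t ≤ x := ht
  push_cast at h2 h1
  linarith

lemma LL_le_of {x t : ℝ} (h : x ≤ G t) : LL G x ≤ t := csInf_le (LL_bdd hc hm hp x) h

lemma le_RR_of {x t : ℝ} (h : G t ≤ x) : t ≤ RR G x := le_csSup (RR_bdd hc hm hp x) h

lemma G_LL (x : ℝ) : G (LL G x) = x := by
  have hcl : IsClosed {t | x ≤ G t} := isClosed_le continuous_const hc
  have hmem := hcl.csInf_mem (LL_ne hc hm hp x) (LL_bdd hc hm hp x)
  have h1 : x ≤ G (LL G x) := hmem
  obtain ⟨t0, ht0⟩ := surj hc hm hp x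
  have h2 : LL G x ≤ t0 := LL_le_of hc hm hp ht0.ge
  have := hm h2
  rw [ht0] at this
  linarith

lemma G_RR (x : ℝ) : G (RR G x) = x := by
  have hcl : IsClosed {t | G t ≤ x} := isClosed_le hc continuous_const
  have hmem := hcl.csSup_mem (RR_ne hc hm hp x) (RR_bdd hc hm hp x)
  have h1 : G (RR G x) ≤ x := hmem
  obtain ⟨t0, ht0⟩ := surj hc hm hp x
  have h2 : t0 ≤ RR G x := le_RR_of hc hm hp ht0.le
  have := hm h2
  rw [ht0] at this
  linarith

lemma LL_le_RR (x : ℝ) : LL G x ≤ RR G x := by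
  obtain ⟨t0, ht0⟩ := surj hc hm hp x
  exact (LL_le_of hc hm hp ht0.ge).trans (le_RR_of hc hm hp ht0.le)

lemma RR_le_LL_of_lt {x y : ℝ} (h : x < y) : RR G x ≤ LL G y := by
  apply csSup_le (RR_ne hc hm hp x)
  intro t ht
  by_contra hlt
  push_neg at hlt
  have h2 : G (LL G y) ≤ G t := hm hlt.le
  rw [G_LL hc hm hp] at h2
  have : G t ≤ x := ht
  linarith

lemma RR_lt_LL {x y : ℝ} (h : x < y) : RR G x < LL G y := by
  rcases lt_or_eq_of_le (RR_le_LL_of_lt hc hm hp h) with h1 | h1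
  · exact h1
  · exfalso
    have := G_RR hc hm hp x
    rw [h1, G_LL hc hm hp] at this
    linarith

lemma LL_mono : Monotone (LL G) := by
  intro x y hxy
  rcases eq_or_lt_of_le hxy with rfl | h
  · exact le_refl _
  · exact le_of_lt ((LL_le_RR hc hm hp x).trans_lt (RR_lt_LL hc hm hp h))

lemma RR_mono : Monotone (RR G) := by
  intro x y hxy
  rcases eq_or_lt_of_le hxy with rfl | h
  · exact le_refl _
  · exact le_of_lt ((RR_lt_LL hc hm hp h).trans_le (LL_le_RR hc hm hp y))

lemma LL_strict : StrictMono (LL G) := by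
  intro x y h
  exact (LL_le_RR hc hm hp x).trans_lt (RR_lt_LL hc hm hp h)

lemma RR_strict : StrictMono (RR G) := by
  intro x y h
  exact (RR_lt_LL hc hm hp h).trans_le (LL_le_RR hc hm hp y)

lemma le_RR_self (b : ℝ) : b ≤ RR G (G b) := le_RR_of hc hm hp le_rfl

lemma LL_self_le (b : ℝ) : LL G (G b) ≤ b := LL_le_of hc hm hp le_rfl

lemma LL_add_one (x : ℝ) : LL G (x + 1) = LL G x + 2*π := by
  apply le_antisymm
  · apply LL_le_of hc hm hp
    rw [hp, G_LL hc hm hp]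
  · have : LL G x ≤ LL G (x+1) - 2*π := by
      apply LL_le_of hc hm hp
      have := hp (LL G (x+1) - 2*π)
      simp only [sub_add_cancel] at this
      rw [G_LL hc hm hp] at this
      linarith
    linarith

lemma RR_add_one (x : ℝ) : RR G (x + 1) = RR G x + 2*π := by
  apply le_antisymm
  · have : RR G (x+1) - 2*π ≤ RR G x := by
      apply le_RR_of hc hm hp
      have := hp (RR G (x+1) - 2*π)
      simp only [sub_add_cancel] at this
      rw [G_RR hc hm hp] at this
      linarith
    linarith
  · apply le_RR_of hc hm hp
    rw [hp, G_RR hc hm hp]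

/-- approximation of LL from below -/
lemma LL_approx {x γ : ℝ} (h : γ < LL G x) : ∃ x' < x, γ < LL G x' := by
  by_contra hcon
  push_neg at hcon
  have : x ≤ G γ := by
    by_contra hx
    push_neg at hx
    have h1 := hcon (G γ + (x - G γ)/2) (by linarith)
    have h2 : G (LL G (G γ + (x - G γ)/2)) = G γ + (x - G γ)/2 := G_LL hc hm hp _
    have h3 := hm h1
    rw [h2] at h3
    linarith
  have := LL_le_of hc hm hp this
  linarith

/-- approximation of RR from above -/
lemma RR_approx {x γ : ℝ} (h : RR G x < γ) : ∃ x' > x, RR G x' < γ := by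
  by_contra hcon
  push_neg at hcon
  have : G γ ≤ x := by
    by_contra hx
    push_neg at hx
    have h1 := hcon (x + (G γ - x)/2) (by linarith)
    have h2 : G (RR G (x + (G γ - x)/2)) = x + (G γ - x)/2 := G_RR hc hm hp _
    have h3 := hm h1
    rw [h2] at h3
    linarith
  have := le_RR_of hc hm hp this
  linarith

end basics

section fan

/-- the bad predicate: the mass-layer from level `c + s z` to `c + s (z+1)` forces width ≥ π -/
def Bad (G' : ℝ → ℝ) (s : ℤ → ℝ) (c : ℝ) (z : ℤ) : Prop :=
  RR G' (c + s z) + π ≤ LL G' (c + s (z + 1))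

variable {m : ℕ} {s : ℤ → ℝ}
variable (hsm : ∀ n : ℤ, s (n + m) = s n + 1) (hss : StrictMono s) (hm3 : 3 ≤ m)

include hc hm hp hsm hss hm3

omit hm3 in
lemma bad_period (c : ℝ) (z : ℤ) : Bad G s c (z + m) ↔ Bad G s c z := by
  unfold Bad
  rw [show (z + (m:ℤ) + 1) = (z + 1) + (m:ℤ) by ring, hsm, hsm,
      show c + (s z + 1) = (c + s z) + 1 by ring,
      show c + (s (z+1) + 1) = (c + s (z+1)) + 1 by ring,
      LL_add_one hc hm hp, RR_add_one hc hm hp]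
  constructor <;> intro h <;> linarith

omit hm3 in
lemma s_add_one_le {a b : ℤ} (h : a + m ≤ b) : s a + 1 ≤ s b := by
  rw [← hsm a]
  exact (hss.le_iff_le).mpr h

/-- room counting: a genuine bad layer plus an R-R gap ≥ π elsewhere is impossible -/
lemma rc_DR {c : ℝ} {w z : ℤ} (hwz : w < z) (hzw : z < w + m)
    (hbad : Bad G s c w)
    (hdr : RR G (c + s z) + π ≤ RR G (c + s (z + 1))) : False := by
  have h1 : LL G (c + s (w+1)) ≤ RR G (c + s z) := by
    calc LL G (c + s (w+1)) ≤ RR G (c + s (w+1)) := LL_le_RR hc hm hp _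
    _ ≤ RR G (c + s z) := RR_mono hc hm hp (by
        have : s (w+1) ≤ s z := hss.le_iff_le.mpr (by omega)
        linarith)
  have hwm : c + s w + 1 = c + s (w + m) := by rw [hsm]; ring
  have h2 : RR G (c + s (w + m)) ≤ RR G (c + s (z+1)) := by
    have hb : RR G (c + s w) + π ≤ LL G (c + s (w+1)) := hbad
    have := RR_add_one hc hm hp (c + s w)
    rw [show c + s w + 1 = c + s (w+m) by rw [hsm]; ring] at this
    linarith
  rcases lt_or_eq_of_le (show z + 1 ≤ w + m by omega) with hlt | heq
  · have : RR G (c + s (z+1)) < RR G (c + s (w+m)) :=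
      RR_strict hc hm hp (by have := hss (show z + 1 < w + (m:ℤ) from hlt); linarith)
    linarith
  · -- z + 1 = w + m, so z ≥ w + 2
    have hz2 : w + 1 < z := by omega
    have h3 : RR G (c + s (w+1)) < RR G (c + s z) :=
      RR_strict hc hm hp (by have := hss hz2; linarith)
    have hb : RR G (c + s w) + π ≤ LL G (c + s (w+1)) := hbad
    have h4 : LL G (c + s (w+1)) ≤ RR G (c + s (w+1)) := LL_le_RR hc hm hp _
    have h5 := RR_add_one hc hm hp (c + s w)
    rw [show c + s w + 1 = c + s (w+m) by rw [hsm]; ring] at h5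
    rw [← heq] at h5
    linarith

/-- room counting: a genuine bad layer plus an L-L gap ≥ π elsewhere is impossible -/
lemma rc_EL {c : ℝ} {w z : ℤ} (hwz : w < z) (hzw : z < w + m)
    (hbad : Bad G s c w)
    (hel : LL G (c + s z) + π ≤ LL G (c + s (z + 1))) : False := by
  have hb : RR G (c + s w) + π ≤ LL G (c + s (w+1)) := hbad
  have h1 : LL G (c + s (w+1)) ≤ LL G (c + s z) := LL_mono hc hm hp (by
    have : s (w+1) ≤ s z := hss.le_iff_le.mpr (by omega)
    linarith)
  have h5 := LL_add_one hc hm hp (c + s w)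
  rw [show c + s w + 1 = c + s (w+m) by rw [hsm]; ring] at h5
  have h6 : LL G (c + s w) ≤ RR G (c + s w) := LL_le_RR hc hm hp _
  rcases lt_or_eq_of_le (show z + 1 ≤ w + m by omega) with hlt | heq
  · have : LL G (c + s (z+1)) < LL G (c + s (w+m)) :=
      LL_strict hc hm hp (by have := hss (show z + 1 < w + (m:ℤ) from hlt); linarith)
    linarith
  · have hz2 : w + 1 < z := by omega
    have h3 : LL G (c + s (w+1)) < LL G (c + s z) :=
      LL_strict hc hm hp (by have := hss hz2; linarith)
    rw [← heq] at h5
    linarith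

/-- if some layer is bad for every c, contradiction with a rich half-arc -/
lemma rc_all {z : ℤ} (hall : ∀ c, Bad G s c z)
    (hb : ∃ b, G b + (s (z+1) - s z) < G (b + π)) : False := by
  obtain ⟨b, hbb⟩ := hb
  have hbad := hall (G b - s z)
  unfold Bad at hbad
  have e1 : G b - s z + s z = G b := by ring
  have e2 : G b - s z + s (z+1) = G b + (s (z+1) - s z) := by ring
  rw [e1, e2] at hbad
  have h1 : b ≤ RR G (G b) := le_RR_self hc hm hp b
  have h2 : LL G (G b + (s (z+1) - s z)) ≤ b + π :=
    LL_le_of hc hm hp (le_of_lt hbb)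
  have h3 : LL G (G b + (s (z+1) - s z)) = b + π := le_antisymm h2 (by linarith)
  have h4 := G_LL hc hm hp (G b + (s (z+1) - s z))
  rw [h3] at h4
  linarith

/-- existence of a good level offset -/
lemma good_c (hbb : ∀ z : ℤ, ∃ b, G b + (s (z+1) - s z) < G (b + π)) :
    ∃ c : ℝ, ∀ z : ℤ, 0 ≤ z → z < m → ¬ Bad G s c z := by
  by_contra hcon
  push_neg at hcon
  -- for every c there is a bad residue
  have hcov : ∀ c : ℝ, ∃ z : ℤ, 0 ≤ z ∧ z < m ∧ Bad G s c z := by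
    intro c
    obtain ⟨z, h0, h1, h2⟩ := hcon c
    exact ⟨z, h0, h1, h2⟩
  -- badness at distinct residues is contradictory
  have hdisj : ∀ (c : ℝ) {z w : ℤ}, 0 ≤ z → z < m → 0 ≤ w → w < m → z ≠ w →
      Bad G s c z → Bad G s c w → False := by
    intro c z w hz0 hzm hw0 hwm hne hbz hbw
    -- normalize z to z' with w < z' < w + m
    rcases lt_or_gt_of_ne hne with h | h
    · -- z < w : use z' = z + m
      have hbz' : Bad G s c (z + m) := (bad_period hc hm hp hsm hss c z).mpr hbz
      have hdr : RR G (c + s (z+m)) + π ≤ RR G (c + s (z+m+1)) := by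
        have : RR G (c + s (z+m)) + π ≤ LL G (c + s (z+m+1)) := hbz'
        have h4 := LL_le_RR hc hm hp (c + s (z+m+1))
        linarith
      exact rc_DR hc hm hp hsm hss hm3 (show w < z + m by omega) (by omega) hbw hdr
    · have hdr : RR G (c + s z) + π ≤ RR G (c + s (z+1)) := by
        have : RR G (c + s z) + π ≤ LL G (c + s (z+1)) := hbz
        have h4 := LL_le_RR hc hm hp (c + s (z+1))
        linarith
      exact rc_DR hc hm hp hsm hss hm3 (show w < z by omega) (by omega) hbw hdr
  classical
  set S : ℤ → Set ℝ := fun z => {c | Bad G s c z} with hS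
  by_cases hclosed : ∀ z : ℤ, 0 ≤ z → z < m → IsClosed (S z)
  · -- all closed: one of them is everything
    obtain ⟨z0, hz00, hz0m, hz0⟩ := hcov 0
    have hopen : IsOpen (S z0) := by
      rw [← isClosed_compl_iff]
      have : (S z0)ᶜ = ⋃ w ∈ (Finset.Icc (0:ℤ) (m-1)).erase z0, S w := by
        ext c
        simp only [Set.mem_compl_iff, Set.mem_iUnion, Finset.mem_erase, Finset.mem_Icc]
        constructor
        · intro hc2
          obtain ⟨w, hw0, hwm, hbw⟩ := hcov c
          refine ⟨w, ⟨?_, ?_, ?_⟩, hbw⟩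
          · intro hwz; rw [hwz] at hbw; exact hc2 hbw
          · exact hw0
          · omega
        · rintro ⟨w, ⟨hne, hw0, hwm⟩, hbw⟩ hbz
          exact hdisj c hz00 hz0m hw0 (by omega) (Ne.symm hne) hbz hbw
      rw [this]
      exact isClosed_biUnion_finset (fun w hw => by
        rcases Finset.mem_erase.mp hw with ⟨_, hw2⟩
        rcases Finset.mem_Icc.mp hw2 with ⟨h1, h2⟩
        exact hclosed w h1 (by omega))
    have huniv : S z0 = Set.univ :=
      IsClopen.eq_univ ⟨hclosed z0 hz00 hz0m, hopen⟩ ⟨0, hz0⟩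
    have hall : ∀ c, Bad G s c z0 := by
      intro c
      have : c ∈ S z0 := by rw [huniv]; trivial
      exact this
    exact rc_all hc hm hp hsm hss hm3 hall (hbb z0)
  · -- some S z not closed: take a boundary point
    push_neg at hclosed
    obtain ⟨z, hz0, hzm, hncl⟩ := hclosed
    have hssub : S z ⊂ closure (S z) := by
      refine ⟨subset_closure, fun hsub => hncl ?_⟩
      have : S z = closure (S z) := le_antisymm subset_closure hsub
      rw [this]; exact isClosed_closure
    obtain ⟨y, hyc, hyn⟩ := Set.exists_of_ssubset hssub
    -- y is approached from one side by S z
    have hside : (∀ d > (0:ℝ), ∃ c ∈ S z, y < c ∧ c < y + d) ∨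
        (∀ d > (0:ℝ), ∃ c ∈ S z, y - d < c ∧ c < y) := by
      by_contra hno
      push_neg at hno
      obtain ⟨⟨d1, hd1, hr⟩, ⟨d2, hd2, hl⟩⟩ := hno
      rw [Metric.mem_closure_iff] at hyc
      obtain ⟨b, hbS, hdist⟩ := hyc (min d1 d2) (lt_min hd1 hd2)
      rw [Real.dist_eq] at hdist
      rcases lt_trichotomy b y with h | h | h
      · have hyb : y - d2 < b := by
          cases abs_cases (y - b) with
          | inl hh => linarith [min_le_right d1 d2]
          | inr hh => linarith [min_le_right d1 d2]
        have := hl b hbS hyb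
        linarith
      · rw [h] at hbS; exact hyn hbS
      · have := hr b hbS h
        have hyb : b < y + d1 := by
          cases abs_cases (y - b) with
          | inl hh => linarith [min_le_left d1 d2]
          | inr hh => linarith [min_le_left d1 d2]
        linarith
    -- the other bad index at y
    obtain ⟨w, hw0, hwm, hbw⟩ := hcov y
    have hwz : w ≠ z := fun h => hyn (show Bad G s y z from h ▸ hbw)
    -- normalize z to z' with w < z' < w + m
    set z' : ℤ := if w < z then z else z + m with hz'
    have hwz' : w < z' := by
      rw [hz']; split
      · assumption
      · omega
    have hz'w : z' < w + m := by
      rw [hz']; split <;> omega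
    have hbadz' : ∀ c, Bad G s c z ↔ Bad G s c z' := by
      intro c
      rw [hz']; split
      · rfl
      · exact (bad_period hc hm hp hsm hss c z).symm
    rcases hside with hr | hl
    · -- approach from the right gives DR at y for z'
      have hdr : RR G (y + s z') + π ≤ RR G (y + s (z' + 1)) := by
        by_contra hlt
        push_neg at hlt
        obtain ⟨x', hx', hRx'⟩ := RR_approx hc hm hp hlt
        obtain ⟨c, hcS, hyc2, hcd⟩ := hr (x' - (y + s (z'+1))) (by linarith)
        have hbadc : Bad G s c z' := (hbadz' c).mp hcS
        have h1 : RR G (c + s (z'+1)) ≤ RR G x' := RR_mono hc hm hp (by linarith)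
        have h2 : RR G (c + s z') + π ≤ LL G (c + s (z'+1)) := hbadc
        have h3 : LL G (c + s (z'+1)) ≤ RR G (c + s (z'+1)) := LL_le_RR hc hm hp _
        have h4 : RR G (y + s z') ≤ RR G (c + s z') := RR_mono hc hm hp (by linarith)
        linarith
      exact rc_DR hc hm hp hsm hss hm3 hwz' hz'w hbw hdr
    · -- approach from the left gives EL at y for z'
      have hel : LL G (y + s z') + π ≤ LL G (y + s (z' + 1)) := by
        by_contra hlt
        push_neg at hlt
        have h0 : LL G (y + s (z'+1)) - π < LL G (y + s z') := by linarith
        obtain ⟨x', hx', hLx'⟩ := LL_approx hc hm hp h0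
        obtain ⟨c, hcS, hyc2, hcd⟩ := hl ((y + s z') - x') (by linarith)
        have hbadc : Bad G s c z' := (hbadz' c).mp hcS
        have h1 : LL G x' ≤ LL G (c + s z') := LL_mono hc hm hp (by linarith)
        have h2 : RR G (c + s z') + π ≤ LL G (c + s (z'+1)) := hbadc
        have h3 : LL G (c + s z') ≤ RR G (c + s z') := LL_le_RR hc hm hp _
        have h4 : LL G (c + s (z'+1)) ≤ LL G (y + s (z'+1)) := LL_mono hc hm hp (by linarith)
        linarith
      exact rc_EL hc hm hp hsm hss hm3 hwz' hz'w hbw hel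

end fan

section build
variable {m : ℕ} {s : ℤ → ℝ}
variable (hsm : ∀ n : ℤ, s (n + m) = s n + 1) (hss : StrictMono s) (hm3 : 3 ≤ m)

include hc hm hp hsm hss hm3

omit hm3 in
lemma bad_shift (c : ℝ) (z : ℤ) : ∀ k : ℤ, Bad G s c (z + k * m) ↔ Bad G s c z := by
  intro k
  induction k using Int.induction_on with
  | zero => simp
  | succ n ih =>
      rw [show z + ((n:ℤ)+1)*m = (z + n*m) + m by ring]
      rw [bad_period hc hm hp hsm hss c (z + n*m)]
      exact ih
  | pred n ih =>
      have h2 := bad_period hc hm hp hsm hss c (z + (-(n:ℤ)-1) * (m:ℤ))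
      rw [show z + (-(n:ℤ)-1)*(m:ℤ) + (m:ℤ) = z + (-(n:ℤ))*(m:ℤ) by ring] at h2
      exact (h2.symm).trans ih

lemma build (c : ℝ) (hgood : ∀ z : ℤ, 0 ≤ z → z < m → ¬ Bad G s c z) :
    ∃ t : ℤ → ℝ, (∀ k, t k < t (k+1)) ∧ (∀ k, t (k+1) - t k < π) ∧
      (∀ k, t (k + m) = t k + 2*π) ∧ (∀ k, G (t k) = c + s k) := by
  have hm0 : 0 < m := by omega
  have hmz : (0:ℤ) < m := by exact_mod_cast hm0
  -- no bad layers at all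
  have hgood' : ∀ z : ℤ, ¬ Bad G s c z := by
    intro z
    have h0 : z % m + (z / m) * m = z := by
      have := Int.mul_ediv_add_emod z m
      linarith
    have h1 : (0:ℤ) ≤ z % m := Int.emod_nonneg z (by omega)
    have h2 : z % m < m := Int.emod_lt_of_pos z hmz
    rw [← h0, bad_shift hc hm hp hsm hss c (z % m) (z / m)]
    exact hgood _ h1 h2
  -- the quantity Q
  set Q : ℤ → ℕ → ℝ := fun z j => LL G (c + s (z + j)) - RR G (c + s z) with hQdef
  have hQ1 : ∀ z : ℤ, Q z 1 < π := by
    intro z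
    have := hgood' z
    unfold Bad at this
    push_neg at this
    simp only [hQdef]
    push_cast
    linarith
  have hQ2 : ∀ z : ℤ, ∀ j : ℕ, j < m → Q z j < 2*π := by
    intro z j hj
    have h1 : s (z + j) < s z + 1 := by
      rw [← hsm z]
      exact hss (by omega)
    have h2 : LL G (c + s (z + j)) < LL G (c + s z + 1) :=
      LL_strict hc hm hp (by linarith)
    rw [LL_add_one hc hm hp] at h2
    have h3 := LL_le_RR hc hm hp (c + s z)
    simp only [hQdef]
    linarith
  have hQπ : ∀ z : ℤ, ∀ j : ℕ, 1 ≤ j → j < m → Q z j < j * π := by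
    intro z j h1 h2
    rcases eq_or_lt_of_le h1 with rfl | h
    · simpa using hQ1 z
    · have := hQ2 z j h2
      have hπ := Real.pi_pos
      have : (2:ℝ) ≤ (j:ℝ) := by exact_mod_cast (by omega : 2 ≤ j)
      nlinarith [hQ2 z j h2]
  -- Q is m-periodic in z
  have hQper : ∀ z : ℤ, ∀ j : ℕ, Q (z + m) j = Q z j := by
    intro z j
    simp only [hQdef]
    rw [show z + (m:ℤ) + (j:ℤ) = (z + j) + m by ring, hsm, hsm,
        show c + (s (z + j) + 1) = (c + s (z+j)) + 1 by ring,
        show c + (s z + 1) = (c + s z) + 1 by ring,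
        LL_add_one hc hm hp, RR_add_one hc hm hp]
    ring
  have hQshift : ∀ z : ℤ, ∀ j : ℕ, ∀ k : ℤ, Q (z + k * m) j = Q z j := by
    intro z j k
    induction k using Int.induction_on with
    | zero => simp
    | succ n ih =>
        rw [show z + ((n:ℤ)+1)*m = (z + n*m) + m by ring, hQper, ih]
    | pred n ih =>
        have h2 := hQper (z + (-(n:ℤ)-1)*(m:ℤ)) j
        rw [show z + (-(n:ℤ)-1)*(m:ℤ) + (m:ℤ) = z + (-(n:ℤ))*(m:ℤ) by ring] at h2
        exact h2.symm.trans ih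
  -- choose ε
  have hTne : (Finset.Ico 1 m ×ˢ Finset.range m).Nonempty := by
    refine ⟨(1, 0), ?_⟩
    simp [Finset.mem_product, Finset.mem_Ico]
    omega
  set ε0 : ℝ := (Finset.Ico 1 m ×ˢ Finset.range m).inf' hTne
      (fun q => ((q.1 : ℝ) * π - Q (q.2 : ℤ) q.1) / q.1) with hε0
  set ε : ℝ := min (π * (m - 2) / m) ε0 with hε
  have hπ := Real.pi_pos
  have hm2 : (2:ℝ) < (m:ℝ) := by exact_mod_cast (by omega : 2 < m)
  have hεpos : 0 < ε := by
    rw [hε]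
    apply lt_min
    · apply div_pos
      · nlinarith
      · linarith
    · rw [hε0, Finset.lt_inf'_iff]
      rintro ⟨j, z⟩ hq
      simp only [Finset.mem_product, Finset.mem_Ico, Finset.mem_range] at hq
      apply div_pos
      · have := hQπ (z : ℤ) j hq.1.1 hq.1.2
        linarith
      · exact_mod_cast (by omega : 0 < j)
  have hεπ : ε < π := by
    rw [hε]
    calc min (π * (m-2)/m) ε0 ≤ π * (m-2)/m := min_le_left _ _
    _ < π := by
        rw [div_lt_iff₀ (by linarith)]
        nlinarith
  have hεm : 2 * π ≤ (m:ℝ) * (π - ε) := by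
    have h1 : ε ≤ π * (m-2)/m := by rw [hε]; exact min_le_left _ _
    have h2 : (m:ℝ) * (π * (m-2)/m) = π * (m-2) := by field_simp
    have h3 : (m:ℝ) * ε ≤ (m:ℝ) * (π * (m-2)/m) :=
      mul_le_mul_of_nonneg_left h1 (by linarith)
    have h4 : (m:ℝ) * (π - ε) = m * π - m * ε := by ring
    have h5 : π * ((m:ℝ) - 2) = m * π - 2 * π := by ring
    rw [h4]
    rw [h2, h5] at h3
    linarith
  have hQε : ∀ z : ℤ, ∀ j : ℕ, 1 ≤ j → j < m → Q z j ≤ j * (π - ε) := by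
    intro z j h1 h2
    have hz0 : (0:ℤ) ≤ z % m := Int.emod_nonneg z (by omega)
    have hz1 : z % m < m := Int.emod_lt_of_pos z hmz
    have hred : Q z j = Q (z % m) j := by
      have h0 : z % m + (z / m) * m = z := by
        have := Int.mul_ediv_add_emod z m
        linarith
      have := hQshift (z % m) j (z / m)
      rw [h0] at this
      exact this
    have hmem : ((j, (z % m).toNat)) ∈ Finset.Ico 1 m ×ˢ Finset.range m := by
      simp [Finset.mem_product, Finset.mem_Ico]
      omega
    have hle : ε ≤ ((j : ℝ) * π - Q ((z % m).toNat : ℤ) j) / j := by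
      calc ε ≤ ε0 := by rw [hε]; exact min_le_right _ _
      _ ≤ _ := Finset.inf'_le _ hmem
    have hjpos : (0:ℝ) < j := by exact_mod_cast (by omega : 0 < j)
    rw [le_div_iff₀ hjpos] at hle
    have : ((z % m).toNat : ℤ) = z % m := Int.toNat_of_nonneg hz0
    rw [this] at hle
    rw [hred]
    nlinarith
  -- the construction
  have hrne : (Finset.range m).Nonempty := ⟨0, Finset.mem_range.mpr hm0⟩
  set f : ℤ → ℕ → ℝ := fun k j => RR G (c + s (k - j)) + j * (π - ε) with hf
  set t : ℤ → ℝ := fun k => (Finset.range m).inf' hrne (f k) with ht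
  have hteq : ∀ k, t k = (Finset.range m).inf' hrne (f k) := fun k => rfl
  have hf0 : ∀ k, f k 0 = RR G (c + s k) := by
    intro k
    simp [hf]
  have hfsucc : ∀ k (j : ℕ), f (k+1) (j+1) = f k j + (π - ε) := by
    intro k j
    simp only [hf]
    push_cast
    rw [show k + 1 - ((j:ℤ)+1) = k - j by ring]
    ring
  have hT2 : ∀ k, t k ≤ RR G (c + s k) := by
    intro k
    have := Finset.inf'_le (f k) (Finset.mem_range.mpr hm0)
    rw [hf0] at this
    exact this
  have hT3 : ∀ k, LL G (c + s k) ≤ t k := by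
    intro k
    apply Finset.le_inf'
    intro j hj
    rcases Nat.eq_zero_or_pos j with rfl | hjpos
    · rw [hf0]
      exact LL_le_RR hc hm hp (c + s k)
    · have hjm : j < m := Finset.mem_range.mp hj
      have := hQε (k - j) j hjpos hjm
      simp only [hQdef] at this
      rw [show k - (j:ℤ) + (j:ℤ) = k by ring] at this
      simp only [hf]
      linarith
  have hT6 : ∀ k, G (t k) = c + s k := by
    intro k
    have h1 := hm (hT2 k)
    have h2 := hm (hT3 k)
    rw [G_RR hc hm hp] at h1
    rw [G_LL hc hm hp] at h2
    linarith
  have hT1 : ∀ k, t (k + m) = t k + 2*π := by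
    intro k
    have hfun : ∀ j ∈ Finset.range m, f (k + m) j = f k j + 2*π := by
      intro j hj
      simp only [hf]
      rw [show k + (m:ℤ) - (j:ℤ) = (k - j) + m by ring, hsm,
          show c + (s (k - j) + 1) = (c + s (k - j)) + 1 by ring,
          RR_add_one hc hm hp]
      ring
    apply le_antisymm
    · obtain ⟨j0, hj0, hj0e⟩ := Finset.exists_mem_eq_inf' hrne (f k)
      calc t (k + m) ≤ f (k + m) j0 := Finset.inf'_le _ hj0
        _ = f k j0 + 2*π := hfun j0 hj0
        _ = t k + 2*π := by rw [hteq k, hj0e]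
    · apply Finset.le_inf'
      intro j hj
      rw [hfun j hj]
      have := Finset.inf'_le (f k) hj
      linarith
  have hT4 : ∀ k, t (k+1) ≤ t k + (π - ε) := by
    intro k
    obtain ⟨j0, hj0, hj0e⟩ := Finset.exists_mem_eq_inf' hrne (f k)
    have hj0m : j0 < m := Finset.mem_range.mp hj0
    have htk : t k = f k j0 := hj0e
    rcases lt_or_eq_of_le (show j0 + 1 ≤ m by omega) with hlt | heq
    · have hmem : j0 + 1 ∈ Finset.range m := Finset.mem_range.mpr hlt
      calc t (k+1) ≤ f (k+1) (j0+1) := Finset.inf'_le _ hmem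
        _ = f k j0 + (π - ε) := hfsucc k j0
        _ = t k + (π - ε) := by rw [htk]
    · -- j0 = m - 1
      have h1 : t (k+1) ≤ RR G (c + s (k+1)) := hT2 (k+1)
      have h2 : s (k + 1 - m) = s (k+1) - 1 := by
        have := hsm (k + 1 - m)
        rw [show k + 1 - (m:ℤ) + m = k + 1 by ring] at this
        linarith
      have h3 : RR G (c + s (k+1)) = RR G (c + s (k + 1 - m)) + 2*π := by
        have h := RR_add_one hc hm hp (c + s (k + 1 - m))
        have e : c + s (k + 1 - (m:ℤ)) + 1 = c + s (k+1) := by rw [h2]; ring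
        rw [e] at h
        exact h
      have h5 : k - (j0:ℤ) = k + 1 - m := by omega
      have h6 : ((j0:ℝ) + 1) = (m:ℝ) := by
        have : ((j0:ℕ):ℝ) + 1 = ((j0 + 1 : ℕ):ℝ) := by push_cast; ring
        rw [this, heq]
      have h7 : t k + (π - ε) = RR G (c + s (k+1-m)) + (m:ℝ) * (π - ε) := by
        rw [htk]
        simp only [hf]
        rw [h5, ← h6]
        ring
      have h8 : RR G (c + s (k+1)) ≤ RR G (c + s (k+1-m)) + (m:ℝ)*(π-ε) := by
        rw [h3]
        linarith
      rw [h7]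
      linarith
  have hT5 : ∀ k, t k < t (k+1) := by
    intro k
    rw [hteq (k+1)]
    rw [Finset.lt_inf'_iff]
    intro j hj
    rcases Nat.eq_zero_or_pos j with rfl | hjpos
    · rw [hf0]
      calc t k ≤ RR G (c + s k) := hT2 k
      _ < RR G (c + s (k+1)) := RR_strict hc hm hp
          (by have := hss (show k < k+1 by omega); linarith)
    · obtain ⟨j', rfl⟩ : ∃ j', j = j' + 1 := ⟨j - 1, by omega⟩
      have hmem : j' ∈ Finset.range m := Finset.mem_range.mpr (by
        have := Finset.mem_range.mp hj; omega)
      have hle : t k ≤ f k j' := Finset.inf'_le _ hmem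
      rw [hfsucc k j']
      have : 0 < π - ε := by linarith
      linarith
  refine ⟨t, hT5, ?_, hT1, hT6⟩
  intro k
  have := hT4 k
  linarith

end build

end PF

namespace PFG

abbrev E2 := EuclideanSpace ℝ (Fin 2)

noncomputable def cx (p : E2) : ℂ := (p 0 : ℂ) + (p 1 : ℂ) * Complex.I

lemma cx_re (p : E2) : (cx p).re = p 0 := by simp [cx]
lemma cx_im (p : E2) : (cx p).im = p 1 := by simp [cx]

lemma cx_eq_zero {p : E2} : cx p = 0 ↔ p = 0 := by
  constructor
  · intro h
    have h0 : p 0 = 0 := by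
      have := congrArg Complex.re h
      simpa [cx_re] using this
    have h1 : p 1 = 0 := by
      have := congrArg Complex.im h
      simpa [cx_im] using this
    ext i
    fin_cases i <;> simpa
  · intro h
    rw [h]
    simp [cx]

lemma measurable_cx : Measurable cx := by
  apply Measurable.add
  · exact Complex.measurable_ofReal.comp (EuclideanSpace.proj (0:Fin 2) : E2 →L[ℝ] ℝ).continuous.measurable
  · exact (Complex.measurable_ofReal.comp (EuclideanSpace.proj (1:Fin 2) : E2 →L[ℝ] ℝ).continuous.measurable).mul measurable_const

noncomputable def ang (p : E2) : ℝ := (cx p).arg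

lemma measurable_ang : Measurable ang := Complex.measurable_arg.comp measurable_cx

/-- polar representation with respect to a base angle -/
lemma polar {p : E2} (hp : p ≠ 0) (a : ℝ) :
    p 0 = ‖cx p‖ * Real.cos (toIcoMod Real.two_pi_pos a (ang p)) ∧
    p 1 = ‖cx p‖ * Real.sin (toIcoMod Real.two_pi_pos a (ang p)) := by
  have hcx : cx p ≠ 0 := fun h => hp (cx_eq_zero.mp h)
  have habs := Complex.norm_mul_cos_add_sin_mul_I (cx p)
  have hre : p 0 = ‖cx p‖ * Real.cos (ang p) := by
    have h2 : ((‖cx p‖ : ℂ) * (Complex.cos ((cx p).arg)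
        + Complex.sin ((cx p).arg) * Complex.I)).re
        = ‖cx p‖ * Real.cos (ang p) := by
      rw [← Complex.ofReal_cos, ← Complex.ofReal_sin]
      simp [ang]
    rw [← cx_re p]
    conv_lhs => rw [← habs]
    rw [h2]
  have him : p 1 = ‖cx p‖ * Real.sin (ang p) := by
    have h2 : ((‖cx p‖ : ℂ) * (Complex.cos ((cx p).arg)
        + Complex.sin ((cx p).arg) * Complex.I)).im
        = ‖cx p‖ * Real.sin (ang p) := by
      rw [← Complex.ofReal_cos, ← Complex.ofReal_sin]
      simp [ang]
    rw [← cx_im p]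
    conv_lhs => rw [← habs]
    rw [h2]
  have hmod : toIcoMod Real.two_pi_pos a (ang p)
      = ang p - (toIcoDiv Real.two_pi_pos a (ang p)) * (2*π) := by
    rw [toIcoMod, zsmul_eq_mul]
  have hcos : Real.cos (toIcoMod Real.two_pi_pos a (ang p)) = Real.cos (ang p) := by
    rw [hmod]
    rw [show ang p - (toIcoDiv Real.two_pi_pos a (ang p) : ℝ) * (2*π)
        = ang p + (-(toIcoDiv Real.two_pi_pos a (ang p)) : ℤ) * (2*π) by push_cast; ring]
    exact Real.cos_add_int_mul_two_pi _ _
  have hsin : Real.sin (toIcoMod Real.two_pi_pos a (ang p)) = Real.sin (ang p) := by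
    rw [hmod]
    rw [show ang p - (toIcoDiv Real.two_pi_pos a (ang p) : ℝ) * (2*π)
        = ang p + (-(toIcoDiv Real.two_pi_pos a (ang p)) : ℤ) * (2*π) by push_cast; ring]
    exact Real.sin_add_int_mul_two_pi _ _
  rw [hcos, hsin]
  exact ⟨hre, him⟩

/-- from polar data: nonzero and angle determined mod 2π -/
lemma ang_spec {p : E2} {r α : ℝ} (hr : 0 < r)
    (h0 : p 0 = r * Real.cos α) (h1 : p 1 = r * Real.sin α) :
    p ≠ 0 ∧ ∃ k : ℤ, ang p = α + k * (2*π) := by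
  have hcx : cx p = (r : ℂ) * Complex.exp (α * Complex.I) := by
    rw [Complex.exp_mul_I]
    rw [cx, h0, h1]
    push_cast
    rw [← Complex.ofReal_cos, ← Complex.ofReal_sin]
    push_cast
    ring
  have habs : ‖cx p‖ = r := by
    rw [hcx]
    rw [norm_mul, Complex.norm_exp_ofReal_mul_I, Complex.norm_real, Real.norm_eq_abs]
    rw [abs_of_pos hr]
    ring
  have hne : cx p ≠ 0 := by
    intro h
    rw [h] at habs
    simp at habs
    linarith
  have hp : p ≠ 0 := fun h => hne (by rw [h] at hne ⊢; exact cx_eq_zero.mpr rfl)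
  refine ⟨hp, ?_⟩
  have harg : (cx p).arg = Complex.arg (Complex.exp (α * Complex.I)) := by
    rw [hcx]
    exact Complex.arg_real_mul _ hr
  have hexp : Complex.exp ((α:ℂ) * Complex.I)
      = Complex.exp ((Complex.exp ((α:ℂ) * Complex.I)).arg * Complex.I) := by
    conv_lhs => rw [← Complex.norm_mul_exp_arg_mul_I (Complex.exp ((α:ℂ) * Complex.I))]
    rw [Complex.norm_exp_ofReal_mul_I]
    simp
  obtain ⟨n, hn⟩ := Complex.exp_eq_exp_iff_exists_int.mp hexp
  have him := congrArg Complex.im hn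
  simp [Complex.mul_I_im] at him
  refine ⟨-n, ?_⟩
  rw [ang, harg]
  push_cast
  linarith


/-- helper: agreement of toIcoMod at different bases -/
lemma mod_agree {x b : ℝ} (a : ℝ)
    (h : toIcoMod Real.two_pi_pos a x ∈ Set.Ico b (b + 2*π)) :
    toIcoMod Real.two_pi_pos b x = toIcoMod Real.two_pi_pos a x := by
  rw [toIcoMod_eq_iff]
  refine ⟨h, toIcoDiv Real.two_pi_pos a x, ?_⟩
  rw [toIcoMod]
  ring

/-- sector characterization -/
lemma sector_eq {a b : ℝ} (hb : b ≤ a + 2*π) :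
    sector a b = {p : E2 | p ≠ 0 ∧ toIcoMod Real.two_pi_pos a (ang p) < b} := by
  ext p
  constructor
  · rintro ⟨r, hr, α, h1, h2, h3, h4⟩
    obtain ⟨hp, k, hk⟩ := ang_spec hr h3 h4
    have : toIcoMod Real.two_pi_pos a (ang p) = α := by
      rw [hk, show α + (k:ℝ)*(2*π) = α + k • (2*π) by rw [zsmul_eq_mul],
        toIcoMod_add_zsmul, toIcoMod_eq_self]
      exact ⟨h1, by linarith⟩
    rw [Set.mem_setOf_eq, this]
    exact ⟨hp, h2⟩
  · rintro ⟨hp, hlt⟩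
    have hcx : cx p ≠ 0 := fun h => hp (cx_eq_zero.mp h)
    have hr : 0 < ‖cx p‖ := by
      simpa [norm_pos_iff] using hcx
    obtain ⟨h0, h1⟩ := polar hp a
    exact ⟨‖cx p‖, hr, toIcoMod Real.two_pi_pos a (ang p),
      (toIcoMod_mem_Ico Real.two_pi_pos a (ang p)).1, hlt, h0, h1⟩

lemma measurable_sector {a b : ℝ} (hb : b ≤ a + 2*π) :
    MeasurableSet (sector a b) := by
  rw [sector_eq hb]
  have h1 : Measurable (fun x : ℝ => toIcoMod Real.two_pi_pos a x) := by
    have : (fun x : ℝ => toIcoMod Real.two_pi_pos a x)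
        = fun x => x - (⌊(x - a) / (2*π)⌋ : ℤ) * (2*π) := by
      funext x
      rw [toIcoMod, toIcoDiv_eq_floor, zsmul_eq_mul]
    rw [this]
    have hf : Measurable fun x : ℝ => (⌊(x - a) / (2*π)⌋ : ℤ) :=
      Int.measurable_floor.comp ((measurable_id.sub measurable_const).div measurable_const)
    have hcast : Measurable (fun n : ℤ => (n : ℝ)) := fun _ _ => trivial
    exact measurable_id.sub ((hcast.comp hf).mul measurable_const)
  have : {p : E2 | p ≠ 0 ∧ toIcoMod Real.two_pi_pos a (ang p) < b}
      = {(0:E2)}ᶜ ∩ ((fun p => toIcoMod Real.two_pi_pos a (ang p)) ⁻¹' (Set.Iio b)) := by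
    ext p
    simp [Set.mem_setOf_eq, Set.mem_inter_iff]
  rw [this]
  exact (MeasurableSet.singleton 0).compl.inter
    ((h1.comp measurable_ang) measurableSet_Iio)

/-- the line through angle t -/
def lineSet (t : ℝ) : Set E2 := {p : E2 | Real.sin t * p 0 - Real.cos t * p 1 = 0}

lemma lineSet_mem {t : ℝ} {p : E2} {r : ℝ} (h0 : p 0 = r * Real.cos t)
    (h1 : p 1 = r * Real.sin t) : p ∈ lineSet t := by
  simp only [lineSet, Set.mem_setOf_eq, h0, h1]
  ring

section withmeasure
variable (μ : Measure E2) [IsProbabilityMeasure μ] (hac : μ ≪ volume)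

include hac in
lemma lineSet_null (t : ℝ) : μ (lineSet t) = 0 := by
  apply hac
  set ℓ : E2 →ₗ[ℝ] ℝ :=
    { toFun := fun p => Real.sin t * p 0 - Real.cos t * p 1
      map_add' := by
        intro x y
        show Real.sin t * (x + y) 0 - Real.cos t * (x + y) 1 = _
        have e0 : (x + y) 0 = x 0 + y 0 := rfl
        have e1 : (x + y) 1 = x 1 + y 1 := rfl
        rw [e0, e1]
        ring
      map_smul' := by
        intro c x
        show Real.sin t * (c • x) 0 - Real.cos t * (c • x) 1 = _
        have e0 : (c • x) 0 = c * x 0 := rfl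
        have e1 : (c • x) 1 = c * x 1 := rfl
        rw [e0, e1]
        simp
        ring } with hl
  have hset : lineSet t = (LinearMap.ker ℓ : Set E2) := by
    ext p
    simp [lineSet, hl, LinearMap.mem_ker]
  rw [hset]
  apply MeasureTheory.Measure.addHaar_submodule
  intro htop
  have : ℓ ≠ 0 := by
    intro h0
    -- evaluate at the point (sin t, -cos t)
    set q : E2 := !₂[Real.sin t, -Real.cos t] with hq
    have : ℓ q = 0 := by rw [h0]; rfl
    have hq0 : q 0 = Real.sin t := rfl
    have hq1 : q 1 = -Real.cos t := rfl
    have hval : ℓ q = Real.sin t * q 0 - Real.cos t * q 1 := rfl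
    rw [hval, hq0, hq1] at this
    nlinarith [Real.sin_sq_add_cos_sq t]
  exact this (LinearMap.ker_eq_top.mp htop)

include hac in
lemma zero_null : μ {(0:E2)} = 0 := by
  have : {(0:E2)} ⊆ lineSet 0 := by
    intro p hp
    rw [Set.mem_singleton_iff] at hp
    rw [hp]
    exact lineSet_mem (r := 0) (by simp) (by simp)
  exact measure_mono_null this (lineSet_null μ hac 0)

/-- sector of full width is the complement of the origin -/
lemma sector_full (a : ℝ) : sector a (a + 2*π) = {(0:E2)}ᶜ := by
  rw [sector_eq (le_refl _)]
  ext p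
  simp only [Set.mem_setOf_eq, Set.mem_compl_iff, Set.mem_singleton_iff]
  constructor
  · exact fun h => h.1
  · intro h
    exact ⟨h, (toIcoMod_mem_Ico Real.two_pi_pos a (ang p)).2⟩

include hac in
lemma sector_full_meas (a : ℝ) : μ (sector a (a + 2*π)) = 1 := by
  rw [sector_full]
  rw [measure_compl (MeasurableSet.singleton 0) (measure_ne_top μ _)]
  rw [zero_null μ hac]
  simp

/-- shifting a sector by an integer number of turns -/
lemma sector_shift (a b : ℝ) (k : ℤ) : sector (a + k*(2*π)) (b + k*(2*π)) = sector a b := by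
  ext p
  constructor
  · rintro ⟨r, hr, α, h1, h2, h3, h4⟩
    refine ⟨r, hr, α - k*(2*π), by linarith, by linarith, ?_, ?_⟩
    · rw [h3, show α - k*(2*π) = α + (-k:ℤ)*(2*π) by push_cast; ring,
        Real.cos_add_int_mul_two_pi]
    · rw [h4, show α - k*(2*π) = α + (-k:ℤ)*(2*π) by push_cast; ring,
        Real.sin_add_int_mul_two_pi]
  · rintro ⟨r, hr, α, h1, h2, h3, h4⟩
    refine ⟨r, hr, α + k*(2*π), by linarith, by linarith, ?_, ?_⟩
    · rw [h3, show α + (k:ℝ)*(2*π) = α + (k:ℤ)*(2*π) by push_cast; ring,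
        Real.cos_add_int_mul_two_pi]
    · rw [h4, show α + (k:ℝ)*(2*π) = α + (k:ℤ)*(2*π) by push_cast; ring,
        Real.sin_add_int_mul_two_pi]

/-- splitting a sector -/
lemma sector_split {a b c : ℝ} (hab : a ≤ b) (hbc : b ≤ c) (hca : c ≤ a + 2*π) :
    sector a c = sector a b ∪ sector b c ∧ Disjoint (sector a b) (sector b c) := by
  have hba : b ≤ a + 2*π := le_trans hbc hca
  have hcb : c ≤ b + 2*π := by linarith
  constructor
  · ext p
    rw [sector_eq hca, sector_eq hba, sector_eq hcb]
    simp only [Set.mem_setOf_eq, Set.mem_union]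
    constructor
    · rintro ⟨hp, hc⟩
      by_cases hsm : toIcoMod Real.two_pi_pos a (ang p) < b
      · exact Or.inl ⟨hp, hsm⟩
      · push_neg at hsm
        right
        refine ⟨hp, ?_⟩
        have := mod_agree a (x := ang p) (b := b)
          ⟨hsm, by
            have := (toIcoMod_mem_Ico Real.two_pi_pos a (ang p)).1
            linarith⟩
        rw [this]
        exact hc
    · rintro (⟨hp, hb2⟩ | ⟨hp, hc2⟩)
      · exact ⟨hp, lt_of_lt_of_le hb2 hbc⟩
      · refine ⟨hp, ?_⟩
        have hmem := toIcoMod_mem_Ico Real.two_pi_pos b (ang p)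
        have := mod_agree b (x := ang p) (b := a)
          ⟨by linarith [hmem.1], by linarith [hc2]⟩
        rw [this]
        exact hc2
  · rw [Set.disjoint_left]
    rintro p hpab hpbc
    rw [sector_eq hba] at hpab
    rw [sector_eq hcb] at hpbc
    obtain ⟨hp, h1⟩ := hpab
    obtain ⟨_, h2⟩ := hpbc
    -- toIcoMod a (ang p) < b ≤ toIcoMod b (ang p) < c ≤ a + 2π
    have hma := toIcoMod_mem_Ico Real.two_pi_pos a (ang p)
    have hmb := toIcoMod_mem_Ico Real.two_pi_pos b (ang p)
    -- difference is an integer multiple of 2π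
    have hdiff : ∃ k : ℤ, toIcoMod Real.two_pi_pos b (ang p)
        = toIcoMod Real.two_pi_pos a (ang p) + k * (2*π) := by
      refine ⟨toIcoDiv Real.two_pi_pos a (ang p) - toIcoDiv Real.two_pi_pos b (ang p), ?_⟩
      rw [toIcoMod, toIcoMod]
      simp only [zsmul_eq_mul]
      push_cast
      ring
    obtain ⟨k, hk⟩ := hdiff
    have hk1 : 0 < k := by
      by_contra hk0
      push_neg at hk0
      have : (k:ℝ) * (2*π) ≤ 0 := by
        apply mul_nonpos_of_nonpos_of_nonneg
        · exact_mod_cast hk0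
        · linarith [Real.two_pi_pos]
      have h3 := hmb.1
      rw [hk] at h3
      linarith
    have : (1:ℝ) * (2*π) ≤ (k:ℝ) * (2*π) := by
      apply mul_le_mul_of_nonneg_right
      · exact_mod_cast hk1
      · linarith [Real.two_pi_pos]
    rw [hk] at h2
    linarith [hma.1]


noncomputable def SM (a b : ℝ) : ℝ := (μ (sector a b)).toReal

lemma SM_nonneg (a b : ℝ) : 0 ≤ SM μ a b := ENNReal.toReal_nonneg

lemma sector_empty {a b : ℝ} (h : b ≤ a) : sector a b = ∅ := by
  ext p
  simp only [Set.mem_empty_iff_false, iff_false]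
  rintro ⟨r, hr, α, h1, h2, _, _⟩
  linarith

lemma SM_add {a b c : ℝ} (hab : a ≤ b) (hbc : b ≤ c) (hca : c ≤ a + 2*π) :
    SM μ a c = SM μ a b + SM μ b c := by
  obtain ⟨hun, hdis⟩ := sector_split hab hbc hca
  unfold SM
  rw [hun, measure_union hdis (measurable_sector (by linarith))]
  rw [ENNReal.toReal_add (measure_ne_top μ _) (measure_ne_top μ _)]

include hac in
lemma SM_total (a : ℝ) : SM μ a (a + 2*π) = 1 := by
  unfold SM
  rw [sector_full_meas μ hac]
  simp

lemma SM_shift (a b : ℝ) (k : ℤ) : SM μ (a + k*(2*π)) (b + k*(2*π)) = SM μ a b := by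
  unfold SM
  rw [sector_shift]

noncomputable def GG (t : ℝ) : ℝ :=
  SM μ 0 (toIcoMod Real.two_pi_pos 0 t) + (toIcoDiv Real.two_pi_pos 0 t : ℝ)

lemma GG_int_shift (t : ℝ) (k : ℤ) : GG μ (t + k*(2*π)) = GG μ t + k := by
  unfold GG
  rw [show t + (k:ℝ)*(2*π) = t + k • (2*π) by rw [zsmul_eq_mul],
      toIcoMod_add_zsmul, toIcoDiv_add_zsmul]
  push_cast
  ring

lemma GG_period (t : ℝ) : GG μ (t + 2*π) = GG μ t + 1 := by
  have := GG_int_shift μ t 1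
  push_cast at this
  rw [show t + 2*π = t + 1*(2*π) by ring]
  exact this

include hac in
lemma GG_eq_SM0 {t : ℝ} (h0 : 0 ≤ t) (h1 : t ≤ 2*π) : GG μ t = SM μ 0 t := by
  rcases lt_or_eq_of_le h1 with h1 | h1
  · have hmod : toIcoMod Real.two_pi_pos 0 t = t :=
      (toIcoMod_eq_self _).mpr ⟨h0, by linarith⟩
    have hdiv : toIcoDiv Real.two_pi_pos 0 t = 0 := by
      have h2 : t - (toIcoDiv Real.two_pi_pos 0 t) • (2*π) = t := by
        rw [← toIcoMod, hmod]
      have h3 : ((toIcoDiv Real.two_pi_pos 0 t : ℝ)) * (2*π) = 0 := by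
        rw [zsmul_eq_mul] at h2
        linarith
      have h4 : (toIcoDiv Real.two_pi_pos 0 t : ℝ) = 0 := by
        rcases mul_eq_zero.mp h3 with h | h
        · exact h
        · linarith [Real.two_pi_pos]
      exact_mod_cast h4
    unfold GG
    rw [hmod, hdiv]
    simp
  · -- t = 2π
    subst h1
    have h2 : GG μ (0 + 2*π) = GG μ 0 + 1 := GG_period μ 0
    have h3 : GG μ 0 = 0 := by
      unfold GG
      have hmod : toIcoMod Real.two_pi_pos 0 (0:ℝ) = 0 :=
        (toIcoMod_eq_self _).mpr ⟨le_refl _, by linarith [Real.two_pi_pos]⟩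
      have hdiv : toIcoDiv Real.two_pi_pos 0 (0:ℝ) = 0 := by
        have h2 : (0:ℝ) - (toIcoDiv Real.two_pi_pos 0 (0:ℝ)) • (2*π) = 0 := by
          rw [← toIcoMod, hmod]
        rw [zsmul_eq_mul] at h2
        have h4 : (toIcoDiv Real.two_pi_pos 0 (0:ℝ) : ℝ) = 0 := by
          rcases mul_eq_zero.mp (by linarith : ((toIcoDiv Real.two_pi_pos 0 (0:ℝ) : ℝ)) * (2*π) = 0) with h | h
          · exact h
          · linarith [Real.two_pi_pos]
        exact_mod_cast h4
      rw [hmod, hdiv]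
      unfold SM
      rw [sector_empty (le_refl 0)]
      simp
    have h4 : SM μ 0 (2*π) = 1 := by
      have := SM_total μ hac 0
      rw [zero_add] at this
      exact this
    have h5 : GG μ (2*π) = 1 := by
      rw [show (2*π:ℝ) = 0 + 2*π by ring, h2, h3]
      ring
    rw [h5, h4]

include hac in
/-- KEY: sector mass equals increment of `GG` -/
lemma KEY {a b : ℝ} (hab : a ≤ b) (hba : b ≤ a + 2*π) :
    (μ (sector a b)).toReal = GG μ b - GG μ a := by
  set k := toIcoDiv Real.two_pi_pos 0 a with hk
  set a' := toIcoMod Real.two_pi_pos 0 a with ha'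
  have haa : a = a' + k*(2*π) := by
    rw [ha', toIcoMod, hk, zsmul_eq_mul]
    ring
  set b' := b - k*(2*π) with hb'
  have hbb : b = b' + k*(2*π) := by rw [hb']; ring
  have ha'm := toIcoMod_mem_Ico Real.two_pi_pos 0 a
  rw [← ha'] at ha'm
  have ha'0 : 0 ≤ a' := ha'm.1
  have ha'2 : a' < 2*π := by have := ha'm.2; linarith [this]
  have hab' : a' ≤ b' := by rw [haa] at hab; linarith
  have hba' : b' ≤ a' + 2*π := by rw [haa] at hba; linarith
  have hSM : (μ (sector a b)).toReal = SM μ a' b' := by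
    show SM μ a b = SM μ a' b'
    rw [haa, hbb, SM_shift]
  have hGa : GG μ a = GG μ a' + k := by rw [haa, GG_int_shift]
  have hGb : GG μ b = GG μ b' + k := by rw [hbb, GG_int_shift]
  rw [hSM, hGa, hGb]
  have hgoal : SM μ a' b' = GG μ b' - GG μ a' → SM μ a' b' = GG μ b' + k - (GG μ a' + k) := by
    intro h; rw [h]; ring
  apply hgoal
  rcases le_or_gt b' (2*π) with hcase | hcase
  · have h1 : SM μ 0 b' = SM μ 0 a' + SM μ a' b' :=
      SM_add μ ha'0 hab' (by linarith [Real.two_pi_pos])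
    rw [GG_eq_SM0 μ hac (le_trans ha'0 hab') hcase, GG_eq_SM0 μ hac ha'0 ha'2.le]
    linarith
  · -- 2π < b' ≤ a' + 2π
    have h1 : SM μ a' b' = SM μ a' (2*π) + SM μ (2*π) b' :=
      SM_add μ (by linarith) (by linarith) (by linarith)
    have h2 : SM μ 0 (2*π) = SM μ 0 a' + SM μ a' (2*π) :=
      SM_add μ ha'0 (by linarith) (by linarith [Real.two_pi_pos])
    have h3 : SM μ (2*π) b' = SM μ 0 (b' - 2*π) := by
      have := SM_shift μ 0 (b' - 2*π) 1
      rw [show (0:ℝ) + (1:ℤ)*(2*π) = 2*π by push_cast; ring,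
          show (b' - 2*π) + (1:ℤ)*(2*π) = b' by push_cast; ring] at this
      exact this
    have h4 : SM μ 0 (2*π) = 1 := by
      have := SM_total μ hac 0
      rw [zero_add] at this
      exact this
    have h5 : GG μ b' = GG μ (b' - 2*π) + 1 := by
      have := GG_period μ (b' - 2*π)
      rw [show b' - 2*π + 2*π = b' by ring] at this
      rw [this]
    have h6 : GG μ (b' - 2*π) = SM μ 0 (b' - 2*π) :=
      GG_eq_SM0 μ hac (by linarith) (by linarith)
    have h7 : GG μ a' = SM μ 0 a' := GG_eq_SM0 μ hac ha'0 ha'2.le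
    rw [h1]
    linarith

include hac in
lemma GG_mono : Monotone (GG μ) := by
  have key : ∀ n : ℕ, ∀ a b : ℝ, a ≤ b → b ≤ a + n*(2*π) → GG μ a ≤ GG μ b := by
    intro n
    induction n with
    | zero =>
        intro a b h1 h2
        simp at h2
        have : a = b := le_antisymm h1 (by linarith)
        rw [this]
    | succ n ih =>
        intro a b h1 h2
        rcases le_or_gt b (a + n*(2*π)) with h3 | h3
        · exact ih a b h1 h3
        · set mid := max a (b - 2*π) with hmid
          have hm1 : a ≤ mid := le_max_left _ _
          have hm2 : mid ≤ b := by
            apply max_le h1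
            linarith [Real.two_pi_pos]
          have hm3 : mid ≤ a + n*(2*π) := by
            apply max_le
            · nlinarith [Real.two_pi_pos, Nat.cast_nonneg (α := ℝ) n]
            · push_cast at h2
              linarith
          have hm4 : b ≤ mid + 2*π := by
            have : b - 2*π ≤ mid := le_max_right _ _
            linarith
          have g1 : GG μ a ≤ GG μ mid := ih a mid hm1 hm3
          have g2 : GG μ mid ≤ GG μ b := by
            have := KEY μ hac hm2 hm4
            have hnn : 0 ≤ (μ (sector mid b)).toReal := ENNReal.toReal_nonneg
            linarith
          linarith
  intro a b hab
  obtain ⟨n, hn⟩ := exists_nat_ge ((b - a)/(2*π))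
  apply key n a b hab
  have h2 := Real.two_pi_pos
  rw [div_le_iff₀ h2] at hn
  linarith

/-- shrinking family of sectors around a ray -/
lemma sector_shrink_subset {t h h' : ℝ} (hh : 0 < h') (hh2 : h' ≤ h) (hh3 : h ≤ 1) :
    sector (t - h') (t + h') ⊆ sector (t - h) (t + h) := by
  have hπ := Real.pi_gt_three
  intro p hp
  rw [sector_eq (by linarith)] at hp
  rw [sector_eq (by linarith)]
  obtain ⟨hp0, hlt⟩ := hp
  have hmem := toIcoMod_mem_Ico Real.two_pi_pos (t - h') (ang p)
  have hag : toIcoMod Real.two_pi_pos (t - h) (ang p)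
      = toIcoMod Real.two_pi_pos (t - h') (ang p) := by
    apply mod_agree
    constructor
    · linarith [hmem.1]
    · linarith [hmem.1, hlt]
  refine ⟨hp0, ?_⟩
  rw [hag]
  linarith

include hac in
lemma GG_cont : Continuous (GG μ) := by
  have hπ := Real.pi_gt_three
  rw [continuous_iff_continuousAt]
  intro t
  set S : ℕ → Set E2 := fun n => sector (t - 1/(n+1)) (t + 1/(n+1)) with hS
  have hh : ∀ n : ℕ, (0:ℝ) < 1/(n+1) ∧ (1:ℝ)/(n+1) ≤ 1 := by
    intro n
    constructor
    · positivity
    · rw [div_le_one (by positivity)]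
      push_cast
      linarith [Nat.cast_nonneg (α := ℝ) n]
  have hanti : Antitone S := by
    intro n m hnm
    apply sector_shrink_subset (hh m).1 _ (hh n).2
    apply div_le_div_of_nonneg_left (by norm_num) (by positivity)
    push_cast
    exact_mod_cast by exact_mod_cast Nat.succ_le_succ hnm
  have hnull : μ (⋂ n, S n) = 0 := by
    apply measure_mono_null _ (lineSet_null μ hac t)
    intro p hp
    rw [Set.mem_iInter] at hp
    have hp0 : p ≠ 0 := by
      have h1 : p ∈ sector (t - 1/((0:ℕ)+1)) (t + 1/((0:ℕ)+1)) := hp 0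
      rw [sector_eq (by norm_num; linarith)] at h1
      exact h1.1
    set y : ℕ → ℝ := fun n => toIcoMod Real.two_pi_pos (t - 1/(n+1)) (ang p) with hy
    have hyn : ∀ n : ℕ, t - 1/(n+1) ≤ y n ∧ y n < t + 1/(n+1) := by
      intro n
      have h1 : p ∈ sector (t - 1/((n:ℕ)+1)) (t + 1/((n:ℕ)+1)) := hp n
      rw [sector_eq (by push_cast; linarith [(hh n).1, (hh n).2])] at h1
      exact ⟨(toIcoMod_mem_Ico Real.two_pi_pos _ _).1, h1.2⟩
    have hyeq : ∀ n, y n = y 0 := by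
      intro n
      have hdiff : ∃ k : ℤ, y n - y 0 = k * (2*π) := by
        refine ⟨toIcoDiv Real.two_pi_pos (t - 1/(0+1)) (ang p)
          - toIcoDiv Real.two_pi_pos (t - 1/(n+1)) (ang p), ?_⟩
        rw [hy]
        simp only [toIcoMod, zsmul_eq_mul]
        push_cast
        ring
      obtain ⟨k, hk⟩ := hdiff
      have hb1 := hyn n
      have hb0 := hyn 0
      have hb0' : t - 1 ≤ y 0 ∧ y 0 < t + 1 := by
        have e : ((0:ℕ):ℝ) + 1 = 1 := by norm_num
        rw [e] at hb0
        constructor <;> [linarith [hb0.1]; linarith [hb0.2]]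
      have habs : |y n - y 0| < 2 := by
        rw [abs_lt]
        constructor
        · linarith [hb1.1, hb0'.2, (hh n).2]
        · linarith [hb1.2, hb0'.1, (hh n).2]
      have hk0 : k = 0 := by
        by_contra hk0
        have : (1:ℝ) ≤ |(k:ℝ)| := by
          have : (1:ℤ) ≤ |k| := Int.one_le_abs hk0
          exact_mod_cast this
        have h2 : |(k:ℝ) * (2*π)| = |(k:ℝ)| * (2*π) := by
          rw [abs_mul, abs_of_pos Real.two_pi_pos]
        rw [hk, h2] at habs
        nlinarith
      rw [hk0] at hk
      push_cast at hk
      linarith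
    have hy0 : y 0 = t := by
      by_contra hne
      have hpos : 0 < |y 0 - t| := abs_pos.mpr (sub_ne_zero.mpr hne)
      obtain ⟨n, hn⟩ := exists_nat_one_div_lt hpos
      have hbn := hyn n
      rw [hyeq n] at hbn
      have hlt2 : |y 0 - t| ≤ 1/(n+1) := by
        rw [abs_le]
        constructor <;> [linarith [hbn.1]; linarith [hbn.2]]
      linarith
    -- now p is on the ray with angle t
    obtain ⟨h0, h1⟩ := polar hp0 (t - 1/(((0:ℕ):ℝ)+1))
    have heq : toIcoMod Real.two_pi_pos (t - 1/(((0:ℕ):ℝ)+1)) (ang p) = t := hy0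
    rw [heq] at h0 h1
    exact lineSet_mem h0 h1
  have hmeas : ∀ n, NullMeasurableSet (S n) μ := by
    intro n
    exact (measurable_sector (by linarith [(hh n).1, (hh n).2])).nullMeasurableSet
  have htend : Filter.Tendsto (fun n => μ (S n)) Filter.atTop (nhds 0) := by
    have := MeasureTheory.tendsto_measure_iInter_atTop hmeas hanti ⟨0, measure_ne_top μ _⟩
    rw [hnull] at this
    exact this
  have htendR : Filter.Tendsto (fun n => (μ (S n)).toReal) Filter.atTop (nhds 0) := by
    have h0 : (0:ENNReal) ≠ ⊤ := by simp
    have := (ENNReal.tendsto_toReal h0).comp htend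
    simpa only [Function.comp_def, ENNReal.toReal_zero] using this
  rw [Metric.continuousAt_iff]
  intro ε hε
  have hev := htendR.eventually (gt_mem_nhds hε)
  obtain ⟨n, hn⟩ := hev.exists
  refine ⟨1/(n+1), (hh n).1, ?_⟩
  intro s hs
  rw [Real.dist_eq] at hs ⊢
  have hs1 : t - 1/(n+1) < s ∧ s < t + 1/(n+1) := by
    rw [abs_lt] at hs
    constructor <;> linarith [hs.1, hs.2]
  have hmono := GG_mono μ hac
  have hb1 : GG μ (t - 1/(n+1)) ≤ GG μ s := hmono hs1.1.le
  have hb2 : GG μ s ≤ GG μ (t + 1/(n+1)) := hmono hs1.2.le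
  have hb3 : GG μ (t - 1/(n+1)) ≤ GG μ t := hmono (by linarith [(hh n).1])
  have hb4 : GG μ t ≤ GG μ (t + 1/(n+1)) := hmono (by linarith [(hh n).1])
  have hkey : (μ (S n)).toReal = GG μ (t + 1/(n+1)) - GG μ (t - 1/(n+1)) := by
    rw [hS]
    exact KEY μ hac (by linarith [(hh n).1]) (by linarith [(hh n).1, (hh n).2])
  rw [abs_lt]
  constructor <;> nlinarith [hn, hkey]


lemma inner_formula (p v : E2) : ⟪p, v⟫ = p 0 * v 0 + p 1 * v 1 := by
  rw [PiLp.inner_apply]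
  rw [Fin.sum_univ_two]
  simp [RCLike.inner_apply]
  ring

/-- raw polar decomposition -/
lemma polar_raw {p : E2} (hp : p ≠ 0) :
    p 0 = ‖cx p‖ * Real.cos (ang p) ∧
    p 1 = ‖cx p‖ * Real.sin (ang p) := by
  have := polar hp (ang p)
  rw [(toIcoMod_eq_self _).mpr ⟨le_refl _, by linarith [Real.two_pi_pos]⟩] at this
  exact this

include hac in
lemma half_eq {v : E2} (hv : v ≠ 0) :
    (μ {θ : E2 | 0 ≤ ⟪θ, v⟫}).toReal = GG μ (ang v - π/2 + π) - GG μ (ang v - π/2) := by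
  have hπ := Real.pi_pos
  have hRpos : 0 < ‖cx v‖ := by
    simp [norm_pos_iff]
    exact fun h => hv (cx_eq_zero.mp h)
  obtain ⟨hv0, hv1⟩ := polar_raw hv
  have hsub1 : sector (ang v - π/2) (ang v - π/2 + π) ⊆ {θ : E2 | 0 ≤ ⟪θ, v⟫} := by
    rintro p ⟨r, hr, α, h1, h2, h3, h4⟩
    rw [Set.mem_setOf_eq, inner_formula, h3, h4, hv0, hv1]
    have hRc : r * Real.cos α * (‖cx v‖ * Real.cos (ang v))
        + r * Real.sin α * (‖cx v‖ * Real.sin (ang v))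
        = (r * ‖cx v‖) * Real.cos (α - ang v) := by
      rw [Real.cos_sub]
      ring
    rw [hRc]
    apply mul_nonneg (by positivity)
    apply Real.cos_nonneg_of_mem_Icc
    constructor
    · linarith
    · linarith
  have hsub2 : {θ : E2 | 0 ≤ ⟪θ, v⟫}
      ⊆ sector (ang v - π/2) (ang v - π/2 + π) ∪ (lineSet (ang v - π/2 + π) ∪ {0}) := by
    intro p hp
    rw [Set.mem_setOf_eq] at hp
    by_cases hp0 : p = 0
    · right; right; exact hp0
    · obtain ⟨h0, h1⟩ := polar hp0 (ang v - π/2)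
      have hβm := toIcoMod_mem_Ico Real.two_pi_pos (ang v - π/2) (ang p)
      have hrpos : 0 < ‖cx p‖ := by
        simp [norm_pos_iff]
        exact fun h => hp0 (cx_eq_zero.mp h)
      have hinner : ⟪p, v⟫ = (‖cx p‖ * ‖cx v‖)
          * Real.cos (toIcoMod Real.two_pi_pos (ang v - π/2) (ang p) - ang v) := by
        rw [inner_formula, h0, h1, hv0, hv1, Real.cos_sub]
        ring
      have hcos : 0 ≤ Real.cos (toIcoMod Real.two_pi_pos (ang v - π/2) (ang p) - ang v) := by
        by_contra hneg
        push_neg at hneg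
        have hpos := mul_pos hrpos hRpos
        nlinarith [hp, hinner]
      have hβle : toIcoMod Real.two_pi_pos (ang v - π/2) (ang p) ≤ ang v - π/2 + π := by
        by_contra hgt
        push_neg at hgt
        have hc : Real.cos (toIcoMod Real.two_pi_pos (ang v - π/2) (ang p) - ang v) < 0 := by
          apply Real.cos_neg_of_pi_div_two_lt_of_lt
          · linarith
          · have := hβm.2
            linarith
        linarith
      rcases lt_or_eq_of_le hβle with hlt | heq
      · left
        rw [sector_eq (by linarith)]
        exact ⟨hp0, hlt⟩
      · right; left
        rw [heq] at h0 h1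
        exact lineSet_mem h0 h1
  have hmeas : μ {θ : E2 | 0 ≤ ⟪θ, v⟫} = μ (sector (ang v - π/2) (ang v - π/2 + π)) := by
    apply le_antisymm
    · calc μ {θ : E2 | 0 ≤ ⟪θ, v⟫}
          ≤ μ (sector (ang v - π/2) (ang v - π/2 + π)
              ∪ (lineSet (ang v - π/2 + π) ∪ {0})) := measure_mono hsub2
      _ ≤ μ (sector (ang v - π/2) (ang v - π/2 + π)) + μ (lineSet (ang v - π/2 + π) ∪ {0}) :=
          measure_union_le _ _
      _ ≤ μ (sector (ang v - π/2) (ang v - π/2 + π))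
          + (μ (lineSet (ang v - π/2 + π)) + μ {0}) := by
          gcongr
          exact measure_union_le _ _
      _ = μ (sector (ang v - π/2) (ang v - π/2 + π)) := by
          rw [lineSet_null μ hac, zero_null μ hac]
          simp
    · exact measure_mono hsub1
  rw [hmeas]
  exact KEY μ hac (by linarith) (by linarith)

include hac in
lemma depth_le (t : ℝ) : depth μ ≤ GG μ (t + π) - GG μ t := by
  have hπ := Real.pi_pos
  set φ := t + π/2 with hφ
  set v : E2 := !₂[Real.cos φ, Real.sin φ] with hv
  have hv0 : v 0 = Real.cos φ := rfl
  have hv1 : v 1 = Real.sin φ := rfl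
  have hvne : v ≠ 0 := by
    intro h
    have h0 : v 0 = 0 := by rw [h]; rfl
    have h1 : v 1 = 0 := by rw [h]; rfl
    rw [hv0] at h0
    rw [hv1] at h1
    nlinarith [Real.sin_sq_add_cos_sq φ]
  obtain ⟨_, k, hk⟩ := ang_spec (p := v) one_pos (by rw [hv0]; ring) (by rw [hv1]; ring)
  have hhalf := half_eq μ hac hvne
  have e1 : ang v - π/2 = t + k*(2*π) := by rw [hk, hφ]; ring
  have e2 : ang v - π/2 + π = (t + π) + k*(2*π) := by rw [hk, hφ]; ring
  rw [e2, e1, GG_int_shift, GG_int_shift] at hhalf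
  have hval : (μ {θ : E2 | 0 ≤ ⟪θ, v⟫}).toReal = GG μ (t + π) - GG μ t := by
    rw [hhalf]; ring
  apply csInf_le
  · refine ⟨0, ?_⟩
    rintro x ⟨w, hw, rfl⟩
    exact ENNReal.toReal_nonneg
  · exact ⟨v, hvne, hval.symm⟩

include hac in
lemma exists_rich {u0 : ℝ} (h : depth μ < 1 - u0) : ∃ b, GG μ b + u0 < GG μ (b + π) := by
  have hπ := Real.pi_pos
  have hne : {r | ∃ v : E2, v ≠ 0 ∧ r = (μ {θ | 0 ≤ ⟪θ, v⟫}).toReal}.Nonempty := by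
    set v : E2 := !₂[1, 0] with hv
    refine ⟨(μ {θ | 0 ≤ ⟪θ, v⟫}).toReal, v, ?_, rfl⟩
    intro hz
    have h0 : v 0 = 1 := rfl
    rw [hz] at h0
    have : (0:E2) 0 = 0 := rfl
    rw [this] at h0
    norm_num at h0
  obtain ⟨x, ⟨v, hvne, rfl⟩, hxlt⟩ := exists_lt_of_csInf_lt hne h
  have hhalf := half_eq μ hac hvne
  set a := ang v - π/2 with ha
  refine ⟨a + π, ?_⟩
  have hper : GG μ (a + π + π) = GG μ a + 1 := by
    have := GG_period μ a
    rw [show a + π + π = a + 2*π by ring]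
    exact this
  rw [hhalf] at hxlt
  rw [hper]
  linarith

end withmeasure

end PFG

section IndexArith
open Real

lemma int_step_mod (m : ℕ) (hm : 0 < m) (n : ℤ) (hc : n % m + 1 < m) :
    (n+1) % m = n % m + 1 ∧ (n+1)/m = n/m := by
  have hne : (m:ℤ) ≠ 0 := by omega
  have hr0 : 0 ≤ n % m := Int.emod_nonneg n hne
  have heq : (m:ℤ) * (n / m) + n % m = n := Int.mul_ediv_add_emod n m
  constructor
  · rw [show n + 1 = (n % m + 1) + (m:ℤ) * (n / m) by linarith]
    rw [Int.add_mul_emod_self_left]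
    exact Int.emod_eq_of_lt (by omega) hc
  · rw [show n + 1 = (n % m + 1) + (m:ℤ) * (n / m) by linarith]
    rw [Int.add_mul_ediv_left _ _ hne]
    rw [Int.ediv_eq_zero_of_lt (by omega) hc]
    ring

lemma int_roll_mod (m : ℕ) (hm : 0 < m) (n : ℤ) (hc : n % m + 1 = m) :
    (n+1) % m = 0 ∧ (n+1)/m = n/m + 1 := by
  have hne : (m:ℤ) ≠ 0 := by omega
  have hr0 : 0 ≤ n % m := Int.emod_nonneg n hne
  have heq : (m:ℤ) * (n / m) + n % m = n := Int.mul_ediv_add_emod n m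
  constructor
  · rw [show n + 1 = 0 + (m:ℤ) * (n / m + 1) by linarith]
    rw [Int.add_mul_emod_self_left]
    simp
  · rw [show n + 1 = 0 + (m:ℤ) * (n / m + 1) by linarith]
    rw [Int.add_mul_ediv_left _ _ hne]
    simp

lemma int_shift_mod (m : ℕ) (hm : 0 < m) (n : ℤ) :
    (n+m)%m = n%m ∧ (n+m)/m = n/m + 1 := by
  have hne : (m:ℤ) ≠ 0 := by omega
  constructor
  · rw [show n + (m:ℤ) = n + (m:ℤ)*1 by ring, Int.add_mul_emod_self_left]
  · rw [show n + (m:ℤ) = n + (m:ℤ)*1 by ring, Int.add_mul_ediv_left _ _ hne]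

end IndexArith

section Seq
variable {m : ℕ} (u : Fin m → ℝ)

noncomputable def uExt : ℕ → ℝ := fun i => if h : i < m then u ⟨i, h⟩ else 1

noncomputable def FF : ℕ → ℝ := fun k => ∑ i ∈ Finset.range k, uExt u i

noncomputable def sSeq : ℤ → ℝ := fun n => ((n / (m:ℤ) : ℤ) : ℝ) + FF u (n % (m:ℤ)).toNat

lemma uExt_fin (i : Fin m) : uExt u (i : ℕ) = u i := by
  unfold uExt
  rw [dif_pos i.isLt]

lemma FF_total (hu : ∑ z, u z = 1) : FF u m = 1 := by
  unfold FF
  rw [← Fin.sum_univ_eq_sum_range (fun i => uExt u i) m]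
  rw [Finset.sum_congr rfl (fun i _ => uExt_fin u i)]
  exact hu

lemma sSeq_step (hm : 0 < m) (n : ℤ) (hu : ∑ z, u z = 1) :
    sSeq u (n + 1) = sSeq u n + uExt u (n % (m:ℤ)).toNat := by
  have hne : (m:ℤ) ≠ 0 := by omega
  have hr0 : 0 ≤ n % (m:ℤ) := Int.emod_nonneg n hne
  have hr1 : n % (m:ℤ) < m := Int.emod_lt_of_pos n (by omega)
  rcases lt_or_eq_of_le (by omega : n % (m:ℤ) + 1 ≤ m) with hcase | hcase
  · obtain ⟨h1, h2⟩ := int_step_mod m hm n hcase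
    have h3 : (n % (m:ℤ) + 1).toNat = (n % (m:ℤ)).toNat + 1 := by omega
    unfold sSeq
    rw [h1, h2, h3]
    unfold FF
    rw [Finset.sum_range_succ]
    ring
  · obtain ⟨h1, h2⟩ := int_roll_mod m hm n hcase
    have h4 : (n % (m:ℤ)).toNat = m - 1 := by omega
    have h5 : FF u (m-1) + uExt u (m-1) = 1 := by
      have hs : FF u (m-1+1) = FF u (m-1) + uExt u (m-1) := Finset.sum_range_succ _ _
      have he : m - 1 + 1 = m := by omega
      rw [he] at hs
      rw [FF_total u hu] at hs
      linarith
    unfold sSeq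
    rw [h1, h2, h4]
    unfold FF
    simp only [Int.toNat_zero, Finset.range_zero, Finset.sum_empty]
    push_cast
    have he : (∑ i ∈ Finset.range (m-1), uExt u i) = FF u (m-1) := rfl
    rw [he]
    linarith

lemma sSeq_period (hm : 0 < m) (n : ℤ) : sSeq u (n + (m:ℤ)) = sSeq u n + 1 := by
  obtain ⟨h1, h2⟩ := int_shift_mod m hm n
  unfold sSeq
  rw [h1, h2]
  push_cast
  ring

end Seq


end Aux


/-- for m ≥ 3, a strictly positive u ∈ Δ^m with
max_z u_z < 1 − δ(μ) can be realized by a polyhedral m-fan: there exist angles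
η_0 < η_1 < ⋯ < η_{m-1} < η_m = η_0 + 2π with consecutive gaps < π whose sectors
carry the prescribed masses u_z. -/
theorem exists_polyhedral_fan_2d {m : ℕ} (hm : 3 ≤ m)
    (μ : Measure (EuclideanSpace ℝ (Fin 2))) [IsProbabilityMeasure μ]
    (hac : μ ≪ volume)
    (u : Fin m → ℝ) (hu : u ∈ simplex m) (hupos : ∀ z, 0 < u z)
    (hmax : ∀ z, u z < 1 - depth μ) :
    ∃ η : ℕ → ℝ,
      (∀ z : Fin m, η z < η ((z : ℕ) + 1)) ∧
      η m = η 0 + 2 * Real.pi ∧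
      (∀ z : Fin m, η ((z : ℕ) + 1) - η z < Real.pi) ∧
      (∀ z : Fin m, (μ (sector (η z) (η ((z : ℕ) + 1)))).toReal = u z) := by
  classical
  have hπ := Real.pi_pos
  have hm0 : 0 < m := by omega
  have hmz : (0:ℤ) < (m:ℤ) := by exact_mod_cast hm0
  have hc : Continuous (PFG.GG μ) := PFG.GG_cont μ hac
  have hmono : Monotone (PFG.GG μ) := PFG.GG_mono μ hac
  have hper : ∀ t, PFG.GG μ (t + 2*Real.pi) = PFG.GG μ t + 1 := PFG.GG_period μ
  have hsm : ∀ n : ℤ, sSeq u (n + (m:ℤ)) = sSeq u n + 1 := sSeq_period u hm0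
  have hss : StrictMono (sSeq u) := by
    apply strictMono_int_of_lt_succ
    intro n
    rw [sSeq_step u hm0 n hu.2]
    have hr1 : (n % (m:ℤ)).toNat < m := by
      have h1 := Int.emod_lt_of_pos n hmz
      have h2 := Int.emod_nonneg n (show (m:ℤ) ≠ 0 by omega)
      omega
    have : 0 < uExt u (n % (m:ℤ)).toNat := by
      unfold uExt
      rw [dif_pos hr1]
      exact hupos _
    linarith
  have hbb : ∀ z : ℤ, ∃ b, PFG.GG μ b + (sSeq u (z+1) - sSeq u z) < PFG.GG μ (b + Real.pi) := by
    intro z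
    have hr1 : ((z : ℤ) % (m:ℤ)).toNat < m := by
      have h1 := Int.emod_lt_of_pos z hmz
      have h2 := Int.emod_nonneg z (show (m:ℤ) ≠ 0 by omega)
      omega
    have hval : sSeq u (z+1) - sSeq u z = uExt u (z % (m:ℤ)).toNat := by
      rw [sSeq_step u hm0 z hu.2]; ring
    rw [hval]
    have hu0 : uExt u (z % (m:ℤ)).toNat = u ⟨(z % (m:ℤ)).toNat, hr1⟩ := by
      unfold uExt
      rw [dif_pos hr1]
    rw [hu0]
    have := hmax ⟨(z % (m:ℤ)).toNat, hr1⟩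
    exact PFG.exists_rich μ hac (by linarith)
  obtain ⟨c, hcgood⟩ := PF.good_c hc hmono hper hsm hss hm hbb
  obtain ⟨t, hT5, hT4, hT1, hT6⟩ := PF.build hc hmono hper hsm hss hm c hcgood
  refine ⟨fun k => t (k : ℤ), ?_, ?_, ?_, ?_⟩
  · intro z
    have h := hT5 ((z : ℕ) : ℤ)
    show t ((z:ℕ) : ℤ) < t (((z:ℕ) + 1 : ℕ) : ℤ)
    rw [show (((z:ℕ) + 1 : ℕ) : ℤ) = ((z:ℕ) : ℤ) + 1 by push_cast; ring]
    exact h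
  · have h := hT1 0
    rw [zero_add] at h
    simpa using h
  · intro z
    have h := hT4 ((z : ℕ) : ℤ)
    show t (((z:ℕ) + 1 : ℕ) : ℤ) - t ((z:ℕ) : ℤ) < Real.pi
    rw [show (((z:ℕ) + 1 : ℕ) : ℤ) = ((z:ℕ) : ℤ) + 1 by push_cast; ring]
    exact h
  · intro z
    have hlt := hT5 ((z : ℕ) : ℤ)
    have hw := hT4 ((z : ℕ) : ℤ)
    have hkey := PFG.KEY μ hac (le_of_lt hlt) (by linarith)
    show (μ (sector (t ((z:ℕ) : ℤ)) (t (((z:ℕ) + 1 : ℕ) : ℤ)))).toReal = u z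
    rw [show (((z:ℕ) + 1 : ℕ) : ℤ) = ((z:ℕ) : ℤ) + 1 by push_cast; ring]
    rw [hkey, hT6, hT6]
    have hval : sSeq u (((z:ℕ) : ℤ) + 1) - sSeq u ((z:ℕ) : ℤ)
        = uExt u ((((z:ℕ) : ℤ) % (m:ℤ)).toNat) := by
      rw [sSeq_step u hm0 _ hu.2]; ring
    have hzm : (((z:ℕ) : ℤ) % (m:ℤ)) = ((z:ℕ) : ℤ) :=
      Int.emod_eq_of_lt (by positivity) (by exact_mod_cast z.isLt)
    rw [show c + sSeq u (((z:ℕ):ℤ) + 1) - (c + sSeq u ((z:ℕ):ℤ))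
        = sSeq u (((z:ℕ):ℤ) + 1) - sSeq u ((z:ℕ):ℤ) by ring, hval, hzm]
    simp only [Int.toNat_natCast]
    unfold uExt
    rw [dif_pos z.isLt]
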